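/- Let u₁, u₂ : ℝ³ → ℂ³ be C¹ vector fields and q : ℝ³ → ℂ a C¹ scalar function. Then η(q·u₁, q·u₂) = q²·η(u₁, u₂), where η(u₁,u₂) = (∇u₁)u₂ − (∇u₂)u₁ + (div u₁)u₂ − (div u₂)u₁ − 2ᵗ(∇u₁)u₂ + 2ᵗ(∇u₂)u₁. -/

import Mathlib

noncomputable def pd (f : (Fin 3 → ℝ) → ℂ) (i : Fin 3) (x : Fin 3 → ℝ) : ℂ :=
  fderiv ℝ f x (Pi.single i 1)

noncomputable def jacC (u : (Fin 3 → ℝ) → Fin 3 → ℂ) (x : Fin 3 → ℝ) :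
    Matrix (Fin 3) (Fin 3) ℂ :=
  Matrix.of fun i j => pd (fun y => u y i) j x

noncomputable def divC (u : (Fin 3 → ℝ) → Fin 3 → ℂ) (x : Fin 3 → ℝ) : ℂ :=
  ∑ i : Fin 3, pd (fun y => u y i) i x

noncomputable def curlC (u : (Fin 3 → ℝ) → Fin 3 → ℂ) (x : Fin 3 → ℝ) : Fin 3 → ℂ :=
  fun i => pd (fun y => u y (i + 2)) (i + 1) x - pd (fun y => u y (i + 1)) (i + 2) x

noncomputable def lapC (f : (Fin 3 → ℝ) → ℂ) (x : Fin 3 → ℝ) : ℂ :=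
  ∑ i : Fin 3, pd (fun y => pd f i y) i x

noncomputable def etaC (u v : (Fin 3 → ℝ) → Fin 3 → ℂ) (x : Fin 3 → ℝ) : Fin 3 → ℂ :=
  Matrix.mulVec (jacC u x) (v x) - Matrix.mulVec (jacC v x) (u x)
    + divC u x • v x - divC v x • u x
    - (2 : ℂ) • Matrix.mulVec (Matrix.transpose (jacC u x)) (v x)
    + (2 : ℂ) • Matrix.mulVec (Matrix.transpose (jacC v x)) (u x)

noncomputable def gammaC (u v : (Fin 3 → ℝ) → Fin 3 → ℂ) (x : Fin 3 → ℝ) : ℂ :=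
  dotProduct (fun i => pd (fun y => divC u y) i x) (v x)
    - dotProduct (fun i => pd (fun y => divC v y) i x) (u x)
    - dotProduct (fun i => lapC (fun y => u y i) x) (v x)
    + dotProduct (fun i => lapC (fun y => v y i) x) (u x)

/-!
By the product rule, `∇(q u) = q ∇u + u ⊗ ∇q` and `div (q u) = q div u + ∇q · u`. Substituting
into `η(q u, q v)`, the terms without derivatives of `q` give `q² η(u, v)`, while those with a
derivative of `q` cancel: the transposed-Jacobian terms both contribute `q (u · v) ∇q`, and the
remaining four terms are `q` times `(∇q · v) u - (∇q · u) v + (∇q · u) v - (∇q · v) u = 0`.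
-/

open Matrix

noncomputable def gradC (q : (Fin 3 → ℝ) → ℂ) (x : Fin 3 → ℝ) : Fin 3 → ℂ :=
  fun j => pd q j x

section ProductRule

variable {q : (Fin 3 → ℝ) → ℂ} {u : (Fin 3 → ℝ) → Fin 3 → ℂ} {x : Fin 3 → ℝ}

theorem pd_mul {f g : (Fin 3 → ℝ) → ℂ} (hf : DifferentiableAt ℝ f x)
    (hg : DifferentiableAt ℝ g x) (j : Fin 3) :
    pd (fun y => f y * g y) j x = f x * pd g j x + g x * pd f j x := by
  simp [pd, fderiv_fun_mul hf hg]

theorem jacC_smul (hq : DifferentiableAt ℝ q x) (hu : DifferentiableAt ℝ u x) :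
    jacC (fun y => q y • u y) x = q x • jacC u x + vecMulVec (u x) (gradC q x) := by
  ext i j
  simp only [jacC, gradC, Pi.smul_apply, smul_eq_mul, Matrix.add_apply, Matrix.smul_apply, of_apply,
    vecMulVec_apply]
  exact pd_mul hq (differentiableAt_pi.mp hu i) j

theorem divC_smul (hq : DifferentiableAt ℝ q x) (hu : DifferentiableAt ℝ u x) :
    divC (fun y => q y • u y) x = q x * divC u x + gradC q x ⬝ᵥ u x := by
  simp only [divC, Pi.smul_apply, smul_eq_mul, pd_mul hq (differentiableAt_pi.mp hu _),
    Finset.sum_add_distrib, Finset.mul_sum, dotProduct, gradC, mul_comm]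

end ProductRule

theorem etaC_smul {q : (Fin 3 → ℝ) → ℂ} {u v : (Fin 3 → ℝ) → Fin 3 → ℂ} {x : Fin 3 → ℝ}
    (hq : DifferentiableAt ℝ q x) (hu : DifferentiableAt ℝ u x) (hv : DifferentiableAt ℝ v x) :
    etaC (fun y => q y • u y) (fun y => q y • v y) x = q x ^ 2 • etaC u v x := by
  simp only [etaC, jacC_smul hq hu, jacC_smul hq hv, divC_smul hq hu, divC_smul hq hv]
  ext i
  simp only [mulVec, dotProduct, vecMulVec_apply, Matrix.add_apply, Matrix.smul_apply, transpose_apply,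
    Pi.add_apply, Pi.sub_apply, Pi.smul_apply, smul_eq_mul, Fin.sum_univ_three]
  ring

theorem stmt11 (u v : (Fin 3 → ℝ) → Fin 3 → ℂ) (q : (Fin 3 → ℝ) → ℂ)
    (hu : ContDiff ℝ 1 u) (hv : ContDiff ℝ 1 v) (hq : ContDiff ℝ 1 q) :
    ∀ x, etaC (fun y => q y • u y) (fun y => q y • v y) x = (q x) ^ 2 • etaC u v x := fun x =>
  etaC_smul (hq.differentiable one_ne_zero x) (hu.differentiable one_ne_zero x)
    (hv.differentiable one_ne_zero x)
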